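/- arXiv:1702.00598 — 3 statements merged into one kernel-verified Lean document; each statement's English description precedes it below -/
import Mathlib

section
/- Suppose each disturbance set W_σ is a C-set. Define the convexified forward reachability multi-set sequence by F̄_0^j = {0} and F̄_{l+1}^j = ⋃_{(s,j,σ)∈E} conv( R(σ, F̄_l^s) ). Then for every integer l ≥ 0 and every node j ∈ V, conv(F_l^j) = conv(F̄_l^j). -/
open Set Pointwise Filter

noncomputable section

/-- One-step forward reachability map `R(σ,S) = A_σ S ⊕ W_σ`. -/
def reach {n N : ℕ} (A : Fin N → Matrix (Fin n) (Fin n) ℝ)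
    (W : Fin N → Set (Fin n → ℝ)) (σ : Fin N) (S : Set (Fin n → ℝ)) : Set (Fin n → ℝ) :=
  (fun x => (A σ).mulVec x) '' S + W σ

/-- One-step nominal (disturbance-free) forward map `R_N(σ,S) = A_σ S`. -/
def reachN {n N : ℕ} (A : Fin N → Matrix (Fin n) (Fin n) ℝ)
    (σ : Fin N) (S : Set (Fin n → ℝ)) : Set (Fin n → ℝ) :=
  (fun x => (A σ).mulVec x) '' S

/-- Forward reachability multi-set sequence: `F_0^j = {0}`,
`F_{l+1}^j = ⋃_{(s,j,σ)∈E} R(σ, F_l^s)`. -/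
def fwdSeq {n N : ℕ} {V : Type*} (Edge : V → V → Fin N → Prop)
    (A : Fin N → Matrix (Fin n) (Fin n) ℝ) (W : Fin N → Set (Fin n → ℝ)) :
    ℕ → V → Set (Fin n → ℝ)
  | 0, _ => {0}
  | l + 1, j => ⋃ s : V, ⋃ σ : Fin N, ⋃ _ : Edge s j σ, reach A W σ (fwdSeq Edge A W l s)

/-- Nominal multi-set sequence: `N_0^j = ⋃_{(s,j,σ)∈E} W_σ`,
`N_{l+1}^j = ⋃_{(s,j,σ)∈E} R_N(σ, N_l^s)`. -/
def nomSeq {n N : ℕ} {V : Type*} (Edge : V → V → Fin N → Prop)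
    (A : Fin N → Matrix (Fin n) (Fin n) ℝ) (W : Fin N → Set (Fin n → ℝ)) :
    ℕ → V → Set (Fin n → ℝ)
  | 0, j => ⋃ s : V, ⋃ σ : Fin N, ⋃ _ : Edge s j σ, W σ
  | l + 1, j => ⋃ s : V, ⋃ σ : Fin N, ⋃ _ : Edge s j σ, reachN A σ (nomSeq Edge A W l s)

/-- A C-set: compact, convex, containing `0` in its interior. -/
def IsCSet {n : ℕ} (S : Set (Fin n → ℝ)) : Prop :=
  IsCompact S ∧ Convex ℝ S ∧ (0 : Fin n → ℝ) ∈ interior S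

/-- Walks in the labeled graph: `WalkFrom Edge i j σs` holds iff there is a walk
from `i` to `j` whose sequence of labels is `σs` (first label read first). -/
def WalkFrom {N : ℕ} {V : Type*} (Edge : V → V → Fin N → Prop) :
    V → V → List (Fin N) → Prop
  | i, j, [] => i = j
  | i, j, σ :: rest => ∃ k, Edge i k σ ∧ WalkFrom Edge k j rest

/-- Ordered matrix product `A_{σ_t} ⋯ A_{σ_1}` along a label sequence `[σ_1,…,σ_t]`. -/
def matProd {n N : ℕ} (A : Fin N → Matrix (Fin n) (Fin n) ℝ) (σs : List (Fin N)) :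
    Matrix (Fin n) (Fin n) ℝ :=
  σs.foldl (fun M σ => A σ * M) 1

/-- Exponential stability of the nominal system:
`‖A_{σ_t}⋯A_{σ_1} x‖ ≤ Γ ρ^t ‖x‖` for every admissible label sequence. -/
def ExpStable {n N : ℕ} {V : Type*} (Edge : V → V → Fin N → Prop)
    (A : Fin N → Matrix (Fin n) (Fin n) ℝ) (Γ ρ : ℝ) : Prop :=
  ∀ (i j : V) (σs : List (Fin N)), WalkFrom Edge i j σs →
    ∀ x : Fin n → ℝ, ‖(matProd A σs).mulVec x‖ ≤ Γ * ρ ^ σs.length * ‖x‖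

/-- A multi-set `{S^j}` is invariant if `R(σ, S^i) ⊆ S^j` for every edge `(i,j,σ)`. -/
def Invariant {n N : ℕ} {V : Type*} (Edge : V → V → Fin N → Prop)
    (A : Fin N → Matrix (Fin n) (Fin n) ℝ) (W : Fin N → Set (Fin n → ℝ))
    (S : V → Set (Fin n → ℝ)) : Prop :=
  ∀ i j σ, Edge i j σ → reach A W σ (S i) ⊆ S j

/-- Strong connectedness of the labeled graph. -/
def StronglyConnected {N : ℕ} {V : Type*} (Edge : V → V → Fin N → Prop) : Prop :=
  ∀ i j : V, ∃ σs : List (Fin N), σs ≠ [] ∧ WalkFrom Edge i j σs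

/-- Convexified forward reachability multi-set sequence:
`F̄_0^j = {0}`, `F̄_{l+1}^j = ⋃_{(s,j,σ)∈E} conv(R(σ, F̄_l^s))`. -/
def cfwdSeq {n N : ℕ} {V : Type*} (Edge : V → V → Fin N → Prop)
    (A : Fin N → Matrix (Fin n) (Fin n) ℝ) (W : Fin N → Set (Fin n → ℝ)) :
    ℕ → V → Set (Fin n → ℝ)
  | 0, _ => {0}
  | l + 1, j => ⋃ s : V, ⋃ σ : Fin N, ⋃ _ : Edge s j σ,
      convexHull ℝ (reach A W σ (cfwdSeq Edge A W l s))

lemma my_hunion {m : ℕ} {ι : Sort*} (f : ι → Set (Fin m → ℝ)) :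
    convexHull ℝ (⋃ i, convexHull ℝ (f i)) = convexHull ℝ (⋃ i, f i) := by
  apply le_antisymm
  · apply convexHull_min _ (convex_convexHull ℝ _)
    exact iUnion_subset fun i =>
      convexHull_min (subset_trans (subset_iUnion f i) (subset_convexHull ℝ _))
        (convex_convexHull ℝ _)
  · exact convexHull_mono (iUnion_mono fun i => subset_convexHull ℝ _)

lemma my_hcongr {m : ℕ} {ι : Sort*} (f g : ι → Set (Fin m → ℝ))
    (h : ∀ i, convexHull ℝ (f i) = convexHull ℝ (g i)) :
    convexHull ℝ (⋃ i, f i) = convexHull ℝ (⋃ i, g i) := by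
  rw [← my_hunion f, ← my_hunion g]
  simp only [h]

/-- if each `W_σ` is a C-set then `conv(F_l^j) = conv(F̄_l^j)` for all `l, j`. -/
theorem stmt5 {n N : ℕ} {V : Type*} (Edge : V → V → Fin N → Prop)
    (A : Fin N → Matrix (Fin n) (Fin n) ℝ) (W : Fin N → Set (Fin n → ℝ))
    (hW : ∀ σ : Fin N, IsCSet (W σ)) :
    ∀ (l : ℕ) (j : V),
      convexHull ℝ (fwdSeq Edge A W l j) = convexHull ℝ (cfwdSeq Edge A W l j) := by
  -- key: conv(reach σ S) depends only on conv S
  have hreach : ∀ (σ : Fin N) (S T : Set (Fin n → ℝ)),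
      convexHull ℝ S = convexHull ℝ T →
      convexHull ℝ (reach A W σ S) = convexHull ℝ (reach A W σ T) := by
    intro σ S T h
    have lin : IsLinearMap ℝ (fun x => (A σ).mulVec x) :=
      ⟨fun x y => Matrix.mulVec_add _ _ _, fun c x => Matrix.mulVec_smul _ _ _⟩
    rw [reach, reach, convexHull_add, convexHull_add, ← lin.image_convexHull,
      ← lin.image_convexHull, h]
  intro l
  induction l with
  | zero => intro j; rfl
  | succ l ih =>
    intro j
    show convexHull ℝ (⋃ s : V, ⋃ σ : Fin N, ⋃ _ : Edge s j σ,
        reach A W σ (fwdSeq Edge A W l s)) =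
      convexHull ℝ (⋃ s : V, ⋃ σ : Fin N, ⋃ _ : Edge s j σ,
        convexHull ℝ (reach A W σ (cfwdSeq Edge A W l s)))
    apply my_hcongr
    intro s
    apply my_hcongr
    intro σ
    apply my_hcongr
    intro _
    rw [(convex_convexHull ℝ _).convexHull_eq]
    exact hreach σ _ _ (ih s)
end
end

section
/- Let Y ⊆ V be an m-unavoidable set of nodes of the strongly connected graph G for some integer m ≥ 1, and let the Reduced system be the constrained switching system on the reduced graph whose matrices are the products Ã of A's along the paths in G between nodes of Y with intermediate nodes outside Y. If ρ̌(A, G) < 1, then ρ̌(Ã, G(Y,Ẽ)) ≤ ρ̌(A, G(V,E)), i.e., the constrained joint spectral radius of the Reduced system is at most that of the original system. -/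
open Set Pointwise Filter

noncomputable section

/-- `Y` is `m`-unavoidable: every walk of length `m` visits a node of `Y`. -/
def Unavoidable {N : ℕ} {V : Type*} (Edge : V → V → Fin N → Prop) (m : ℕ)
    (Y : Set V) : Prop :=
  ∀ (v : Fin (m + 1) → V) (σ : Fin m → Fin N),
    (∀ i : Fin m, Edge (v i.castSucc) (v i.succ) (σ i)) → ∃ i, v i ∈ Y

/-- Walks whose intermediate nodes all lie outside `Y` (endpoints unconstrained). -/
def WalkAvoid {N : ℕ} {V : Type*} (Edge : V → V → Fin N → Prop) (Y : Set V) :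
    V → V → List (Fin N) → Prop
  | _, _, [] => False
  | i, j, [σ] => Edge i j σ
  | i, j, σ :: σ' :: rest => ∃ k, Edge i k σ ∧ k ∉ Y ∧ WalkAvoid Edge Y k j (σ' :: rest)

/-- Products of the reduced-system matrices along walks of length `k` of the reduced graph
from `i ∈ Y` to `j ∈ Y`: each reduced edge is a path in `G` between nodes of `Y` with
intermediate nodes outside `Y`, and carries the product of the `A`'s along it. -/
def rWalkProds {n N : ℕ} {V : Type*} (Edge : V → V → Fin N → Prop) (Y : Set V)
    (A : Fin N → Matrix (Fin n) (Fin n) ℝ) :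
    ℕ → V → V → Set (Matrix (Fin n) (Fin n) ℝ)
  | 0, i, j => {M | i = j ∧ M = 1}
  | k + 1, i, j => {M | ∃ (d : V) (σs : List (Fin N)) (M' : Matrix (Fin n) (Fin n) ℝ),
      WalkAvoid Edge Y i d σs ∧ d ∈ Y ∧ M' ∈ rWalkProds Edge Y A k d j ∧
      M = M' * matProd A σs}

lemma matProd_foldl {n N : ℕ} (A : Fin N → Matrix (Fin n) (Fin n) ℝ)
    (σs : List (Fin N)) (M : Matrix (Fin n) (Fin n) ℝ) :
    σs.foldl (fun M σ => A σ * M) M = matProd A σs * M := by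
  induction σs generalizing M with
  | nil => simp [matProd]
  | cons σ rest ih =>
    simp only [List.foldl_cons, matProd]
    rw [ih (A σ * M), ih (A σ * 1)]
    simp [mul_assoc]

lemma matProd_append {n N : ℕ} (A : Fin N → Matrix (Fin n) (Fin n) ℝ)
    (σs τs : List (Fin N)) :
    matProd A (σs ++ τs) = matProd A τs * matProd A σs := by
  rw [matProd, List.foldl_append, matProd_foldl]
  rfl

lemma walkFrom_append {N : ℕ} {V : Type*} {Edge : V → V → Fin N → Prop}
    {i j l : V} {σs τs : List (Fin N)} (h1 : WalkFrom Edge i j σs)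
    (h2 : WalkFrom Edge j l τs) : WalkFrom Edge i l (σs ++ τs) := by
  induction σs generalizing i with
  | nil => cases h1; exact h2
  | cons σ rest ih =>
    obtain ⟨k, hk, hw⟩ := h1
    exact ⟨k, hk, ih hw⟩

lemma walkAvoid_walkFrom {N : ℕ} {V : Type*} {Edge : V → V → Fin N → Prop}
    {Y : Set V} {i j : V} {σs : List (Fin N)} (h : WalkAvoid Edge Y i j σs) :
    WalkFrom Edge i j σs ∧ σs ≠ [] := by
  induction σs generalizing i with
  | nil => exact absurd h (by simp [WalkAvoid])
  | cons σ rest ih =>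
    refine ⟨?_, by simp⟩
    match rest, h with
    | [], h => exact ⟨j, h, rfl⟩
    | σ' :: rest', ⟨k, hk, _, hw⟩ => exact ⟨k, hk, (ih hw).1⟩

lemma rWalkProds_exists {n N : ℕ} {V : Type*} {Edge : V → V → Fin N → Prop}
    {Y : Set V} {A : Fin N → Matrix (Fin n) (Fin n) ℝ} :
    ∀ {k : ℕ} {i j : V} {M : Matrix (Fin n) (Fin n) ℝ},
    M ∈ rWalkProds Edge Y A k i j →
    ∃ σs : List (Fin N), WalkFrom Edge i j σs ∧ k ≤ σs.length ∧ M = matProd A σs := by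
  intro k
  induction k with
  | zero =>
    rintro i j M ⟨rfl, rfl⟩
    exact ⟨[], rfl, Nat.zero_le _, rfl⟩
  | succ k ih =>
    rintro i j M ⟨d, σs, M', hwa, _, hM', rfl⟩
    obtain ⟨τs, hτw, hτl, rfl⟩ := ih hM'
    obtain ⟨hσw, hσne⟩ := walkAvoid_walkFrom hwa
    refine ⟨σs ++ τs, walkFrom_append hσw hτw, ?_, (matProd_append A σs τs).symm⟩
    have : 1 ≤ σs.length := List.length_pos_iff.mpr hσne
    simp only [List.length_append]
    omega

/-- if `ρ̌(A,G) < 1` then the constrained joint spectral radius of the Reduced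
system is at most that of the original system. The CJSRs are the limits `L` and `L'` of the
quantities `ρ̌_k = max{‖A_{σ_k}⋯A_{σ_1}‖^{1/k} : admissible}` for the two systems, computed
with a fixed nonnegative submultiplicative matrix norm `nrm`. -/
theorem stmt13 {n N : ℕ} {V : Type*} (Edge : V → V → Fin N → Prop)
    (A : Fin N → Matrix (Fin n) (Fin n) ℝ)
    (nrm : Matrix (Fin n) (Fin n) ℝ → ℝ)
    (hnrm_nonneg : ∀ M, 0 ≤ nrm M)
    (hnrm_submul : ∀ M M', nrm (M * M') ≤ nrm M * nrm M')
    (hconn : StronglyConnected Edge)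
    (m : ℕ) (hm : 1 ≤ m) (Y : Set V) (hY : Unavoidable Edge m Y)
    (L L' : ℝ)
    (hL : Tendsto (fun k : ℕ => sSup {x : ℝ | ∃ (i j : V) (σs : List (Fin N)),
        WalkFrom Edge i j σs ∧ σs.length = k ∧ x = nrm (matProd A σs) ^ ((1 : ℝ) / k)})
      atTop (nhds L))
    (hL' : Tendsto (fun k : ℕ => sSup {x : ℝ | ∃ (i j : V) (M : Matrix (Fin n) (Fin n) ℝ),
        i ∈ Y ∧ j ∈ Y ∧ M ∈ rWalkProds Edge Y A k i j ∧ x = nrm M ^ ((1 : ℝ) / k)})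
      atTop (nhds L'))
    (hL1 : L < 1) :
    L' ≤ L := by
  set g : ℕ → ℝ := fun k : ℕ => sSup {x : ℝ | ∃ (i j : V) (σs : List (Fin N)),
      WalkFrom Edge i j σs ∧ σs.length = k ∧ x = nrm (matProd A σs) ^ ((1 : ℝ) / k)} with hg
  have hg0 : ∀ k, 0 ≤ g k := by
    intro k
    apply Real.sSup_nonneg
    rintro x ⟨i, j, σs, -, -, rfl⟩
    exact Real.rpow_nonneg (hnrm_nonneg _) _
  have hL0 : 0 ≤ L := ge_of_tendsto' hL hg0
  have key : ∀ r : ℝ, L < r → r < 1 → L' ≤ r := by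
    intro r hLr hr1
    have hr0 : 0 < r := lt_of_le_of_lt hL0 hLr
    have hev : ∀ᶠ t in atTop, g t < r := hL.eventually_lt_const hLr
    obtain ⟨K, hK⟩ := eventually_atTop.mp hev
    refine le_of_tendsto hL' ?_
    filter_upwards [eventually_ge_atTop (K + 1)] with k hk
    refine Real.sSup_le ?_ hr0.le
    rintro x ⟨i, j, M, hiY, hjY, hM, rfl⟩
    obtain ⟨σs, hw, hlen, rfl⟩ := rWalkProds_exists hM
    set t := σs.length with ht
    have htk : k ≤ t := hlen
    have hk1 : 1 ≤ k := le_trans (by omega) hk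
    have ht0 : t ≠ 0 := by omega
    have hk0 : k ≠ 0 := by omega
    have ha0 : 0 ≤ nrm (matProd A σs) := hnrm_nonneg _
    -- bound the element of the original set by g t
    have hbdd : BddAbove {x : ℝ | ∃ (i j : V) (σs' : List (Fin N)),
        WalkFrom Edge i j σs' ∧ σs'.length = t ∧ x = nrm (matProd A σs') ^ ((1 : ℝ) / t)} := by
      refine Set.Finite.bddAbove (Set.Finite.subset
        ((List.finite_length_eq (Fin N) t).image
          (fun σs' => nrm (matProd A σs') ^ ((1 : ℝ) / t))) ?_)
      rintro x ⟨i', j', σs', -, hl, rfl⟩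
      exact ⟨σs', hl, rfl⟩
    have hmem : nrm (matProd A σs) ^ ((1 : ℝ) / t) ≤ g t :=
      le_csSup hbdd ⟨i, j, σs, hw, rfl, rfl⟩
    have h1 : nrm (matProd A σs) ^ ((1 : ℝ) / t) ≤ r :=
      hmem.trans (hK t (le_trans (by omega) htk)).le
    have heq : nrm (matProd A σs) ^ ((1 : ℝ) / k)
        = (nrm (matProd A σs) ^ ((1 : ℝ) / t)) ^ ((t : ℝ) / k) := by
      rw [← Real.rpow_mul ha0]
      congr 1
      field_simp
    rw [heq]
    have hdiv0 : (0 : ℝ) ≤ (t : ℝ) / k := by positivity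
    calc (nrm (matProd A σs) ^ ((1 : ℝ) / t)) ^ ((t : ℝ) / k)
        ≤ r ^ ((t : ℝ) / k) :=
          Real.rpow_le_rpow (Real.rpow_nonneg ha0 _) h1 hdiv0
      _ ≤ r ^ (1 : ℝ) := by
          apply Real.rpow_le_rpow_of_exponent_ge hr0 hr1.le
          rw [le_div_iff₀ (by exact_mod_cast Nat.pos_of_ne_zero hk0), one_mul]
          exact_mod_cast htk
      _ = r := Real.rpow_one r
  by_contra hlt
  push_neg at hlt
  have h1 : L < min ((L + L') / 2) ((L + 1) / 2) := by
    apply lt_min <;> linarith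
  have h2 : min ((L + L') / 2) ((L + 1) / 2) < 1 :=
    lt_of_le_of_lt (min_le_right _ _) (by linarith)
  have h3 := key _ h1 h2
  have h4 : min ((L + L') / 2) ((L + 1) / 2) < L' :=
    lt_of_le_of_lt (min_le_left _ _) (by linarith)
  linarith
end
end

section
/- Suppose the disturbance and constraint sets are C-sets, G is strongly connected, there exist Γ ≥ 1, ρ ∈ (0,1) with ‖A_{σ_t}···A_{σ_1} x‖ ≤ Γ ρ^t ‖x‖ for every x and every admissible label sequence, and the minimal compact invariant multi-set satisfies S_m^j ⊆ int X_j for all j. Fix an integer T ≥ 1, and let {Š_M^j}_{j∈V} be the maximal admissible invariant multi-set of the T-product Lifted system (with the same constraint sets X_j) and {S_M^j}_{j∈V} that of the System. Then for every j ∈ V, S_M^j = Š_M^j ∩ ⋂ C(σ(j,d), Š_M^d), the intersection over all walks in G of some length between 1 and T−1 starting at j and ending at any node d, where C(σ(j,d), S) denotes the composition of the one-step backward maps along the label sequence σ(j,d). -/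
open Set Pointwise Filter

noncomputable section

/-- Multi-step forward reachability map along a label list (first label applied first). -/
def reachList {n N : ℕ} (A : Fin N → Matrix (Fin n) (Fin n) ℝ)
    (W : Fin N → Set (Fin n → ℝ)) : List (Fin N) → Set (Fin n → ℝ) → Set (Fin n → ℝ)
  | [], S => S
  | σ :: rest, S => reachList A W rest (reach A W σ S)

/-- Multi-step nominal forward map along a label list (first label applied first). -/
def reachNList {n N : ℕ} (A : Fin N → Matrix (Fin n) (Fin n) ℝ) :
    List (Fin N) → Set (Fin n → ℝ) → Set (Fin n → ℝ)
  | [], S => S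
  | σ :: rest, S => reachNList A rest (reachN A σ S)

/-- Multi-step backward reachability map along a label sequence:
`C({σ_1,…,σ_p}, S) = {x : R({σ_1,…,σ_p},{x}) ⊆ S}`. -/
def bwdList {n N : ℕ} (A : Fin N → Matrix (Fin n) (Fin n) ℝ)
    (W : Fin N → Set (Fin n → ℝ)) (σs : List (Fin N)) (S : Set (Fin n → ℝ)) :
    Set (Fin n → ℝ) :=
  {x | reachList A W σs {x} ⊆ S}

/-- Invariance with respect to the T-product Lifted system: each lifted edge is a walk of
length `T` in `G`, and carries the composed reach map along its labels. -/
def TLiftInvariant {n N : ℕ} {V : Type*} (Edge : V → V → Fin N → Prop)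
    (A : Fin N → Matrix (Fin n) (Fin n) ℝ) (W : Fin N → Set (Fin n → ℝ))
    (T : ℕ) (S : V → Set (Fin n → ℝ)) : Prop :=
  ∀ (i j : V) (σs : List (Fin N)), WalkFrom Edge i j σs → σs.length = T →
    reachList A W σs (S i) ⊆ S j

/-!
Every invariant multi-set is invariant for the lifted system, so `S_M ⊆ Š_M` by maximality of
`Š_M`; since `S_M` is carried into itself along every walk, it also lies in the backward sets,
which gives `⊆`. Conversely, the right-hand side `R` is admissible, and it is invariant: one
step from a point of `R^i` along an edge extends a walk of length `p ≤ T - 1` from its endpoint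
to one of length `p + 1 ≤ T` from `i`, whose image is controlled by the backward sets if
`p + 1 < T` and by lifted invariance of `Š_M` if `p + 1 = T`. Maximality of `S_M` gives `⊇`.
-/

def liftedRecovery {n N : ℕ} {V : Type*} (Edge : V → V → Fin N → Prop)
    (A : Fin N → Matrix (Fin n) (Fin n) ℝ) (W : Fin N → Set (Fin n → ℝ))
    (T : ℕ) (S : V → Set (Fin n → ℝ)) (j : V) : Set (Fin n → ℝ) :=
  S j ∩ ⋂ d : V, ⋂ σs : List (Fin N),
    ⋂ _ : WalkFrom Edge j d σs ∧ 1 ≤ σs.length ∧ σs.length ≤ T - 1, bwdList A W σs (S d)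

section

variable {n N : ℕ} {V : Type*} {Edge : V → V → Fin N → Prop}
  {A : Fin N → Matrix (Fin n) (Fin n) ℝ} {W : Fin N → Set (Fin n → ℝ)}

lemma reach_mono (σ : Fin N) : Monotone (reach A W σ) :=
  fun _ _ h => add_subset_add (image_mono h) Subset.rfl

lemma reachList_mono : ∀ σs : List (Fin N), Monotone (reachList A W σs)
  | [], _, _, h => h
  | σ :: rest, _, _, h => reachList_mono rest (reach_mono σ h)

lemma reachList_singleton_subset (σs : List (Fin N)) {x : Fin n → ℝ} {S : Set (Fin n → ℝ)}
    (hx : x ∈ S) : reachList A W σs {x} ⊆ reachList A W σs S :=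
  reachList_mono σs (singleton_subset_iff.2 hx)

lemma exists_mem_reach_singleton {σ : Fin N} {S : Set (Fin n → ℝ)} {x : Fin n → ℝ}
    (hx : x ∈ reach A W σ S) : ∃ y ∈ S, x ∈ reach A W σ {y} := by
  obtain ⟨_, ⟨y, hy, rfl⟩, w, hw, rfl⟩ := hx
  exact ⟨y, hy, add_mem_add ⟨y, rfl, rfl⟩ hw⟩

lemma Invariant.reachList_subset {S : V → Set (Fin n → ℝ)} (hS : Invariant Edge A W S) :
    ∀ {σs : List (Fin N)} {i j : V}, WalkFrom Edge i j σs → reachList A W σs (S i) ⊆ S j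
  | [], _, _, rfl => Subset.rfl
  | σ :: _, i, _, ⟨k, he, hw⟩ =>
      (reachList_mono _ (hS i k σ he)).trans (hS.reachList_subset hw)

lemma Invariant.tLiftInvariant {S : V → Set (Fin n → ℝ)} (hS : Invariant Edge A W S)
    (T : ℕ) : TLiftInvariant Edge A W T S :=
  fun _ _ _ hw _ => hS.reachList_subset hw

lemma mem_liftedRecovery {T : ℕ} {S : V → Set (Fin n → ℝ)} {j : V} {y : Fin n → ℝ} :
    y ∈ liftedRecovery Edge A W T S j ↔ y ∈ S j ∧ ∀ d σs, WalkFrom Edge j d σs →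
      1 ≤ σs.length → σs.length ≤ T - 1 → reachList A W σs {y} ⊆ S d := by
  simp [liftedRecovery, bwdList, and_imp]

lemma Invariant.subset_liftedRecovery {T : ℕ} {S S' : V → Set (Fin n → ℝ)}
    (hS : Invariant Edge A W S) (hSS' : ∀ j, S j ⊆ S' j) (j : V) :
    S j ⊆ liftedRecovery Edge A W T S' j := fun _ hx =>
  mem_liftedRecovery.2 ⟨hSS' j hx, fun d _ hw _ _ =>
    (reachList_singleton_subset _ hx).trans ((hS.reachList_subset hw).trans (hSS' d))⟩

lemma TLiftInvariant.reachList_subset_of_mem_liftedRecovery {T : ℕ} {S : V → Set (Fin n → ℝ)}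
    (hS : TLiftInvariant Edge A W T S) {i d : V} {y : Fin n → ℝ}
    (hy : y ∈ liftedRecovery Edge A W T S i) {σs : List (Fin N)} (hw : WalkFrom Edge i d σs)
    (hpos : 1 ≤ σs.length) (hle : σs.length ≤ T) : reachList A W σs {y} ⊆ S d := by
  rw [mem_liftedRecovery] at hy
  rcases lt_or_eq_of_le hle with hlt | heq
  · exact hy.2 d σs hw hpos (by omega)
  · exact (reachList_singleton_subset σs hy.1).trans (hS i d σs hw heq)

lemma TLiftInvariant.invariant_liftedRecovery {T : ℕ} (hT : 1 ≤ T) {S : V → Set (Fin n → ℝ)}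
    (hS : TLiftInvariant Edge A W T S) : Invariant Edge A W (liftedRecovery Edge A W T S) := by
  intro i j σ he x hx
  obtain ⟨y, hy, hxy⟩ := exists_mem_reach_singleton hx
  refine mem_liftedRecovery.2 ⟨?_, fun d σs hw hpos hle => ?_⟩
  · exact hS.reachList_subset_of_mem_liftedRecovery hy (σs := [σ]) ⟨j, he, rfl⟩
      le_rfl (by simpa using hT) hxy
  · have hstep : reachList A W σs {x} ⊆ reachList A W (σ :: σs) {y} :=
      reachList_singleton_subset σs hxy
    exact hstep.trans (hS.reachList_subset_of_mem_liftedRecovery hy ⟨j, he, hw⟩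
      (by simp) (by simp only [List.length_cons]; omega))

end

theorem stmt18_general {n N : ℕ} {V : Type*} (Edge : V → V → Fin N → Prop)
    (A : Fin N → Matrix (Fin n) (Fin n) ℝ) (W : Fin N → Set (Fin n → ℝ))
    (X : V → Set (Fin n → ℝ))
    (T : ℕ) (hT : 1 ≤ T)
    (SM : V → Set (Fin n → ℝ))
    (hSMInv : Invariant Edge A W SM)
    (hSMAdm : ∀ j : V, SM j ⊆ X j)
    (hSMMax : ∀ S : V → Set (Fin n → ℝ), Invariant Edge A W S → (∀ j, S j ⊆ X j) →
      ∀ j, S j ⊆ SM j)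
    (SMT : V → Set (Fin n → ℝ))
    (hSMTInv : TLiftInvariant Edge A W T SMT)
    (hSMTAdm : ∀ j : V, SMT j ⊆ X j)
    (hSMTMax : ∀ S : V → Set (Fin n → ℝ), TLiftInvariant Edge A W T S →
      (∀ j, S j ⊆ X j) → ∀ j, S j ⊆ SMT j) :
    ∀ j : V,
      SM j = SMT j ∩ ⋂ d : V, ⋂ σs : List (Fin N),
        ⋂ _ : WalkFrom Edge j d σs ∧ 1 ≤ σs.length ∧ σs.length ≤ T - 1,
        bwdList A W σs (SMT d) := by
  intro j
  have hSM_sub : ∀ j, SM j ⊆ SMT j := hSMTMax SM (hSMInv.tLiftInvariant T) hSMAdm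
  have hRecAdm : ∀ j, liftedRecovery Edge A W T SMT j ⊆ X j :=
    fun j => inter_subset_left.trans (hSMTAdm j)
  exact Subset.antisymm (hSMInv.subset_liftedRecovery hSM_sub j)
    (hSMMax _ (hSMTInv.invariant_liftedRecovery hT) hRecAdm j)

/-- the maximal admissible invariant multi-set of the System is recovered from
that of the T-product Lifted system via
`S_M^j = Š_M^j ∩ ⋂ C(σ(j,d), Š_M^d)`, the intersection over all walks of length
`1 ≤ ⋅ ≤ T−1` starting at `j`. -/
theorem stmt18 {n N : ℕ} {V : Type*} (Edge : V → V → Fin N → Prop)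
    (A : Fin N → Matrix (Fin n) (Fin n) ℝ) (W : Fin N → Set (Fin n → ℝ))
    (X : V → Set (Fin n → ℝ))
    (hW : ∀ σ : Fin N, IsCSet (W σ)) (hX : ∀ j : V, IsCSet (X j))
    (hconn : StronglyConnected Edge)
    (Γ ρ : ℝ) (hΓ : 1 ≤ Γ) (hρ : ρ ∈ Set.Ioo (0 : ℝ) 1)
    (hstab : ExpStable Edge A Γ ρ)
    (Sm : V → Set (Fin n → ℝ))
    (hSmInv : Invariant Edge A W Sm)
    (hSmCpt : ∀ j : V, IsCompact (Sm j))
    (hSmMin : ∀ S : V → Set (Fin n → ℝ), Invariant Edge A W S →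
      (∀ j, IsCompact (S j)) → ∀ j, Sm j ⊆ S j)
    (hSmInt : ∀ j : V, Sm j ⊆ interior (X j))
    (T : ℕ) (hT : 1 ≤ T)
    (SM : V → Set (Fin n → ℝ))
    (hSMInv : Invariant Edge A W SM)
    (hSMAdm : ∀ j : V, SM j ⊆ X j)
    (hSMMax : ∀ S : V → Set (Fin n → ℝ), Invariant Edge A W S → (∀ j, S j ⊆ X j) →
      ∀ j, S j ⊆ SM j)
    (SMT : V → Set (Fin n → ℝ))
    (hSMTInv : TLiftInvariant Edge A W T SMT)
    (hSMTAdm : ∀ j : V, SMT j ⊆ X j)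
    (hSMTMax : ∀ S : V → Set (Fin n → ℝ), TLiftInvariant Edge A W T S →
      (∀ j, S j ⊆ X j) → ∀ j, S j ⊆ SMT j) :
    ∀ j : V,
      SM j = SMT j ∩ ⋂ d : V, ⋂ σs : List (Fin N),
        ⋂ _ : WalkFrom Edge j d σs ∧ 1 ≤ σs.length ∧ σs.length ≤ T - 1,
        bwdList A W σs (SMT d) :=
  stmt18_general Edge A W X T hT SM hSMInv hSMAdm hSMMax SMT hSMTInv hSMTAdm hSMTMax
end
end
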